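/- Let S be a finite set of points in ℝ^d, let z ∈ ℝ^d \ S be in general position with respect to S, suppose |S| ≥ d + 2 and S is a z-containing set. Then there exist a point u ∈ S, a set X contained in the set of extreme points of conv(S) with X affinely independent and |X| = d + 1, a subset T ⊆ X with |T| = d, a nonzero linear functional f on ℝ^d, and a real number c, such that: z lies in the interior of conv(X); f(t) = c for every t ∈ T and f(x) ≤ c for every x ∈ S (so the hyperplane {f = c} spanned by T is a common facet hyperplane of the simplex conv(X) and of conv(S)); f(u) = c; and S \ {u} is a z-containing set. -/

import Mathlib

/-- Points of `ℝ^d`. -/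
abbrev Pt (d : ℕ) := EuclideanSpace ℝ (Fin d)

/-- `X` is `z`-containing: `z` lies in the interior of the convex hull of `X`. -/
def IsZContaining (d : ℕ) (z : Pt d) (X : Set (Pt d)) : Prop :=
  z ∈ interior (convexHull ℝ X)

/-- `X` is `z`-avoiding: `z` does not lie in the interior of the convex hull of `X`. -/
def IsZAvoiding (d : ℕ) (z : Pt d) (X : Set (Pt d)) : Prop :=
  z ∉ interior (convexHull ℝ X)

/-- `𝒞(S)`: the collection of minimal `z`-containing subsets of `S`. -/
def MinContaining (d : ℕ) (z : Pt d) (S : Set (Pt d)) : Set (Set (Pt d)) :=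
  {C | C ⊆ S ∧ IsZContaining d z C ∧ ∀ Y : Set (Pt d), Y ⊂ C → ¬ IsZContaining d z Y}

/-- `𝒜(S)`: the collection of maximal `z`-avoiding subsets of `S`. -/
def MaxAvoiding (d : ℕ) (z : Pt d) (S : Set (Pt d)) : Set (Set (Pt d)) :=
  {A | A ⊆ S ∧ IsZAvoiding d z A ∧ ∀ B : Set (Pt d), B ⊆ S → A ⊂ B → ¬ IsZAvoiding d z B}

/-- `z` is in general position with respect to `S`: for every `X ⊆ S` whose affine span
has dimension less than `d`, `z` does not belong to the affine span of `X`. -/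
def GenPos (d : ℕ) (z : Pt d) (S : Set (Pt d)) : Prop :=
  ∀ X : Set (Pt d), X ⊆ S → Module.finrank ℝ (vectorSpan ℝ X) < d → z ∉ affineSpan ℝ X

/-!
For an extreme point `x` of `conv S`, follow the ray from `x` through `z` until it leaves
`conv S` at `b`. A supporting hyperplane at `b` exposes a face of `conv S`, and Carathéodory's
theorem with general position gives a simplex on `x` and extreme points of that face having `z`
in its interior; its facet opposite `x` lies on the hyperplane.

If the theorem failed, every such facet would consist of points `u` of `S` whose removal destroys
the `z`-containing property. Exchanging a vertex of one simplex for a point of `S` outside it shows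
that there are at most `d` such points, so every facet is the same set `N` of extreme points.
Taking `x ∈ N`, the facet opposite `x` would contain `x`.
-/

open Set

section Convex

variable {E : Type*} [NormedAddCommGroup E] [NormedSpace ℝ E]

theorem IsCompact.convexHull_extremePoints_eq {K : Set E} (hK : IsCompact K) (hKc : Convex ℝ K)
    (hfin : (K.extremePoints ℝ).Finite) : convexHull ℝ (K.extremePoints ℝ) = K :=
  (hfin.isCompact_convexHull (𝕜 := ℝ)).isClosed.closure_eq.symm.trans
    (closure_convexHull_extremePoints hK hKc)

theorem IsCompact.exists_notMem_interior_mem_segment {K : Set E} (hK : IsCompact K) {x z : E}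
    (hz : z ∈ interior K) (hxz : x ≠ z) : ∃ b ∈ K \ interior K, z ∈ segment ℝ x b := by
  set g : ℝ → E := fun σ => σ • (z - x) + x
  have hg : Topology.IsClosedEmbedding g :=
    (Homeomorph.addRight x).isClosedEmbedding.comp
      (isClosedEmbedding_smul_left (sub_ne_zero.2 hxz.symm))
  have hRK : ¬ g '' Ici 1 ⊆ interior K := fun h =>
    not_bddAbove_Ici (1 : ℝ) <| (hg.isCompact_preimage hK).bddAbove.mono fun σ hσ =>
      interior_subset (s := K) (h (mem_image_of_mem g hσ))
  have hR : IsPreconnected (g '' Ici 1) := isPreconnected_Ici.image g hg.continuous.continuousOn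
  obtain ⟨b, ⟨hbK, ⟨σ, hσ : 1 ≤ σ, rfl⟩⟩, hb⟩ :
      ∃ b ∈ closure (interior K) ∩ g '' Ici 1, b ∉ interior K := by
    by_contra! h
    exact hRK (hR.subset_of_closure_inter_subset isOpen_interior
      ⟨z, ⟨1, self_mem_Ici, by simp [g]⟩, hz⟩ h)
  refine ⟨g σ, ⟨closure_minimal interior_subset hK.isClosed hbK, hb⟩,
    1 - σ⁻¹, σ⁻¹, by simp [inv_le_one_of_one_le₀ hσ], by positivity, by ring, ?_⟩
  have : σ ≠ 0 := by positivity
  simp only [g, smul_add, smul_smul, inv_mul_cancel₀ this, one_smul, sub_smul]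
  abel

theorem Convex.exists_forall_le_of_notMem_interior {K : Set E} (hK : Convex ℝ K) {b z : E}
    (hb : b ∉ interior K) (hz : z ∈ interior K) :
    ∃ f : StrongDual ℝ E, (∀ p ∈ K, f p ≤ f b) ∧ f z < f b := by
  obtain ⟨f, hf, hfK⟩ := geometric_hahn_banach_of_nonempty_interior_point hK hb ⟨z, hz⟩
  refine ⟨f, hfK, ?_⟩
  have : f '' interior K ⊆ interior (Iic (f b)) :=
    interior_maximal (image_subset_iff.2 fun p hp => hfK p (interior_subset hp))
      (f.isOpenMap_of_ne_zero hf _ isOpen_interior)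
  simpa using this (mem_image_of_mem f hz)

end Convex

theorem AffineBasis.exists_mem_convexHull_insert_range_sdiff {ι E : Type*} [Fintype ι]
    [AddCommGroup E] [Module ℝ E] (b : AffineBasis ι ℝ E) {z : E}
    (hz : z ∈ convexHull ℝ (range b)) (s : E) :
    ∃ j, z ∈ convexHull ℝ (insert s (range b \ {b j})) := by
  classical
  set lam := fun i => b.coord i z
  set mu := fun i => b.coord i s
  have hlam : ∀ i, 0 ≤ lam i := by
    rw [b.convexHull_eq_nonneg_coord] at hz
    exact hz
  obtain ⟨i₀, hi₀⟩ : ∃ i, 0 < mu i := by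
    by_contra! h
    have := Finset.sum_nonpos fun i (_ : i ∈ Finset.univ) => h i
    rw [b.sum_coord_apply_eq_one s] at this
    norm_num at this
  -- `α` is the largest weight of `s` keeping all weights `lam - α * mu` nonnegative
  obtain ⟨j, hj, hjmin⟩ := Finset.exists_min_image {i | 0 < mu i} (fun i => lam i / mu i)
    ⟨i₀, by simpa using hi₀⟩
  set α := lam j / mu j
  have hmuj : 0 < mu j := by simpa using hj
  have hα : 0 ≤ α := div_nonneg (hlam j) hmuj.le
  set w : Option ι → ℝ := fun o => o.elim α fun i => lam i - α * mu i
  have hw : ∀ i, 0 ≤ lam i - α * mu i := by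
    intro i
    rcases lt_or_ge 0 (mu i) with h | h
    · have := hjmin i (by simpa using h)
      rw [le_div_iff₀ h] at this
      linarith
    · nlinarith [hlam i]
  have hwj : lam j - α * mu j = 0 := by
    simp only [α, div_mul_cancel₀ _ hmuj.ne', sub_self]
  refine ⟨j, ?_⟩
  have hmem := (convex_convexHull ℝ (insert s (range b \ {b j}))).finsum_mem (w := w)
    (z := fun o => o.elim s b) (Option.rec hα hw) ?_ ?_
  · rw [finsum_eq_sum_of_fintype, Fintype.sum_option] at hmem
    simp only [w, Option.elim, sub_smul, Finset.sum_sub_distrib, mul_smul, ← Finset.smul_sum,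
      b.linear_combination_coord_eq_self, lam, mu] at hmem
    convert hmem using 1
    abel
  · rw [finsum_eq_sum_of_fintype, Fintype.sum_option]
    simp only [w, Option.elim, Finset.sum_sub_distrib, ← Finset.mul_sum, lam, mu,
      b.sum_coord_apply_eq_one]
    ring
  · rintro (_ | i) hi
    · exact subset_convexHull ℝ _ (mem_insert s _)
    · refine subset_convexHull ℝ _ (mem_insert_of_mem s ⟨mem_range_self i, ?_⟩)
      rintro hij
      rw [b.ind.injective hij] at hi
      exact hi hwj

namespace GenPos

variable {d : ℕ} {z : Pt d} {S : Set (Pt d)}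

theorem affineSpan_eq_top (hgen : GenPos d z S) {X : Set (Pt d)} (hXS : X ⊆ S)
    (hz : z ∈ affineSpan ℝ X) : affineSpan ℝ X = ⊤ := by
  rw [AffineSubspace.affineSpan_eq_top_iff_vectorSpan_eq_top_of_nonempty ℝ _ _
    ((affineSpan_nonempty ℝ).1 ⟨z, hz⟩)]
  apply Submodule.eq_top_of_finrank_eq
  have hle := Submodule.finrank_le (vectorSpan ℝ X)
  have hge := le_of_not_gt fun h => hgen X hXS h hz
  rw [finrank_euclideanSpace_fin] at hle ⊢
  omega

theorem exists_simplex_subset (hgen : GenPos d z S) {A : Set (Pt d)} (hAS : A ⊆ S)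
    (hz : z ∈ convexHull ℝ A) :
    ∃ Y ⊆ A, AffineIndependent ℝ ((↑) : Y → Pt d) ∧ Y.ncard = d + 1 ∧
      z ∈ interior (convexHull ℝ Y) := by
  obtain ⟨ι, _, p, w, hpA, hp, hw0, hw1, hwz⟩ := eq_pos_convex_span_of_mem_convexHull hz
  have hzp : z ∈ convexHull ℝ (range p) :=
    mem_convexHull_of_exists_fintype w p (fun i => (hw0 i).le) hw1 mem_range_self hwz
  let b : AffineBasis ι ℝ (Pt d) :=
    ⟨p, hp, hgen.affineSpan_eq_top (hpA.trans hAS) (convexHull_subset_affineSpan _ hzp)⟩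
  refine ⟨range p, hpA, hp.range, ?_, ?_⟩
  · rw [← Nat.card_coe_set_eq, Nat.card_range_of_injective hp.injective, Nat.card_eq_fintype_card,
      hp.affineSpan_eq_top_iff_card_eq_finrank_add_one.1 b.tot, finrank_euclideanSpace_fin]
  · change z ∈ interior (convexHull ℝ (range b))
    rw [b.interior_convexHull]
    intro i
    have hcoord : b.coord i z = w i := by
      rw [← hwz, ← Finset.univ.affineCombination_eq_linear_combination _ _ hw1]
      exact b.coord_apply_combination_of_mem (Finset.mem_univ i) hw1
    exact hcoord ▸ hw0 i

theorem isZContaining_of_mem_convexHull (hgen : GenPos d z S) {A : Set (Pt d)} (hAS : A ⊆ S)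
    (hz : z ∈ convexHull ℝ A) : IsZContaining d z A :=
  let ⟨_, hYA, _, _, hYz⟩ := hgen.exists_simplex_subset hAS hz
  interior_mono (convexHull_mono hYA) hYz

end GenPos

theorem exists_simplex_with_common_facet_hyperplane_opposite {d : ℕ} {z : Pt d} {S : Set (Pt d)}
    (hS : S.Finite) (hzS : z ∉ S) (hgen : GenPos d z S) (hScont : IsZContaining d z S) {x : Pt d}
    (hx : x ∈ (convexHull ℝ S).extremePoints ℝ) :
    ∃ X ⊆ (convexHull ℝ S).extremePoints ℝ,
      AffineIndependent ℝ ((↑) : X → Pt d) ∧ X.ncard = d + 1 ∧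
      ∃ T ⊆ X, T.ncard = d ∧ x ∉ T ∧
        ∃ f : Pt d →ₗ[ℝ] ℝ, f ≠ 0 ∧ ∃ c : ℝ,
          z ∈ interior (convexHull ℝ X) ∧ (∀ t ∈ T, f t = c) ∧ ∀ p ∈ S, f p ≤ c := by
  set K := convexHull ℝ S
  have hxS : x ∈ S := extremePoints_convexHull_subset hx
  have hK : IsCompact K := hS.isCompact_convexHull (𝕜 := ℝ)
  obtain ⟨b, ⟨hbK, hb⟩, hzb⟩ :=
    hK.exists_notMem_interior_mem_segment hScont (ne_of_mem_of_not_mem hxS hzS)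
  obtain ⟨f, hfK, hfz⟩ := (convex_convexHull ℝ S).exists_forall_le_of_notMem_interior hb hScont
  set F := f.toExposed K
  have hF : IsExposed ℝ K F := ContinuousLinearMap.toExposed.isExposed
  have hbF : b ∈ F := ⟨hbK, hfK⟩
  have hfF : ∀ p ∈ F, f p = f b := fun p hp => le_antisymm (hfK p hp.1) (hp.2 b hbK)
  have hFext : F.extremePoints ℝ ⊆ K.extremePoints ℝ :=
    hF.isExtreme.extremePoints_subset_extremePoints
  have hFhull : convexHull ℝ (F.extremePoints ℝ) = F :=
    (hF.isCompact hK).convexHull_extremePoints_eq (hF.convex (convex_convexHull ℝ S))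
      ((hS.subset extremePoints_convexHull_subset).subset hFext)
  have hzA : z ∈ convexHull ℝ (insert x (F.extremePoints ℝ)) :=
    (convex_convexHull ℝ _).segment_subset (subset_convexHull ℝ _ (mem_insert x _))
      (convexHull_mono (subset_insert x _) (hFhull.symm ▸ hbF)) hzb
  obtain ⟨Y, hYA, hY, hYcard, hYz⟩ := hgen.exists_simplex_subset
    (insert_subset hxS (hFext.trans extremePoints_convexHull_subset)) hzA
  have hxY : x ∈ Y := by
    by_contra hxY
    have hYf : Y ⊆ {p | f p = f b} := fun y hy =>
      hfF y (extremePoints_subset (𝕜 := ℝ) ((hYA hy).resolve_left (ne_of_mem_of_not_mem hy hxY)))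
    exact hfz.ne (convexHull_min hYf (convex_hyperplane f.toLinearMap.isLinear _)
      (interior_subset hYz))
  have hf : (f : Pt d →ₗ[ℝ] ℝ) ≠ 0 := fun hf => by
    have hf0 := LinearMap.congr_fun hf
    simp only [ContinuousLinearMap.coe_coe, LinearMap.zero_apply] at hf0
    linarith [hf0 z, hf0 b]
  refine ⟨Y, fun y hy => ?_, hY, hYcard, Y \ {x}, sdiff_subset, ?_, fun h => h.2 rfl, f, hf, f b,
    hYz, ?_, fun p hp => hfK p (subset_convexHull ℝ S hp)⟩
  · rcases hYA hy with rfl | hyF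
    exacts [hx, hFext hyF]
  · rw [ncard_sdiff_singleton_of_mem hxY, hYcard, Nat.add_sub_cancel]
  · rintro t ⟨htY, htx⟩
    exact hfF t (extremePoints_subset (𝕜 := ℝ) ((hYA htY).resolve_left htx))

theorem ncard_setOf_not_isZContaining_diff_le {d : ℕ} {z : Pt d} {S : Set (Pt d)}
    (hS : S.Finite) (hgen : GenPos d z S) (hcard : d + 2 ≤ S.ncard)
    (hScont : IsZContaining d z S) :
    {u ∈ S | ¬ IsZContaining d z (S \ {u})}.ncard ≤ d := by
  obtain ⟨Y, hYS, hY, hYcard, hYz⟩ := hgen.exists_simplex_subset subset_rfl (interior_subset hScont)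
  obtain ⟨s, hsS, hsY⟩ := exists_mem_notMem_of_ncard_lt_ncard (by omega : Y.ncard < S.ncard)
    (hS.subset hYS)
  have hYfin : Y.Finite := hS.subset hYS
  have : Fintype Y := hYfin.fintype
  let b : AffineBasis Y ℝ (Pt d) := ⟨(↑), hY, by
    rw [Subtype.range_coe]
    exact affineSpan_eq_top_of_nonempty_interior ⟨z, hYz⟩⟩
  have hrange : range b = Y := Subtype.range_coe
  obtain ⟨j, hj⟩ := b.exists_mem_convexHull_insert_range_sdiff (hrange ▸ interior_subset hYz) s
  rw [hrange] at hj
  have hjS : IsZContaining d z (S \ {(j : Pt d)}) := by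
    refine hgen.isZContaining_of_mem_convexHull sdiff_subset (convexHull_mono ?_ hj)
    rintro y (rfl | ⟨hyY, hyj⟩)
    exacts [⟨hsS, fun h => hsY (h ▸ j.2)⟩, ⟨hYS hyY, hyj⟩]
  calc {u ∈ S | ¬ IsZContaining d z (S \ {u})}.ncard
      ≤ (Y \ {(j : Pt d)}).ncard := ncard_le_ncard ?_ hYfin.sdiff
    _ = d := by rw [ncard_sdiff_singleton_of_mem j.2, hYcard, Nat.add_sub_cancel]
  rintro u ⟨huS, hu⟩
  refine ⟨by_contra fun huY => hu (interior_mono (convexHull_mono ?_) hYz), ?_⟩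
  · exact fun y hy => ⟨hYS hy, fun hyu => huY (hyu ▸ hy)⟩
  · rintro rfl
    exact hu hjS

theorem exists_simplex_with_common_facet_hyperplane
    (d : ℕ) (S : Set (Pt d)) (hS : S.Finite) (z : Pt d) (hzS : z ∉ S)
    (hgen : GenPos d z S) (hcard : d + 2 ≤ S.ncard) (hScont : IsZContaining d z S) :
    ∃ u ∈ S, ∃ X ⊆ Set.extremePoints ℝ (convexHull ℝ S),
      AffineIndependent ℝ ((↑) : X → Pt d) ∧ X.ncard = d + 1 ∧
      ∃ T ⊆ X, T.ncard = d ∧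
        ∃ f : Pt d →ₗ[ℝ] ℝ, f ≠ 0 ∧ ∃ c : ℝ,
          z ∈ interior (convexHull ℝ X) ∧
          (∀ t ∈ T, f t = c) ∧ (∀ x ∈ S, f x ≤ c) ∧
          f u = c ∧ IsZContaining d z (S \ {u}) := by
  set E := (convexHull ℝ S).extremePoints ℝ
  set N := {u ∈ S | ¬ IsZContaining d z (S \ {u})}
  have hd : d ≠ 0 := by
    rintro rfl
    have := ncard_le_one_of_subsingleton S
    omega
  by_contra hgoal
  -- otherwise every facet `T` opposite an extreme point consists of points of `N`, and as `N`
  -- has at most `d` points it is all of `N`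
  have hN : ∀ x ∈ E, x ∉ N ∧ N ⊆ E ∧ N.ncard = d := by
    intro x hx
    obtain ⟨X, hXE, hX, hXcard, T, hTX, hT, hxT, f, hf, c, hzX, hfT, hfS⟩ :=
      exists_simplex_with_common_facet_hyperplane_opposite hS hzS hgen hScont hx
    have hTN : T ⊆ N := fun u hu => ⟨extremePoints_convexHull_subset (hXE (hTX hu)), fun hu' =>
      hgoal ⟨u, extremePoints_convexHull_subset (hXE (hTX hu)), X, hXE, hX, hXcard, T, hTX, hT,
        f, hf, c, hzX, hfT, hfS, hfT u hu, hu'⟩⟩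
    have hTeq : T = N := eq_of_subset_of_ncard_le hTN
      (hT.symm ▸ ncard_setOf_not_isZContaining_diff_le hS hgen hcard hScont)
      (hS.subset (sep_subset S _))
    exact ⟨hTeq ▸ hxT, hTeq ▸ hTX.trans hXE, hTeq ▸ hT⟩
  obtain ⟨x, hx⟩ : E.Nonempty :=
    (hS.isCompact_convexHull (𝕜 := ℝ)).extremePoints_nonempty ⟨z, interior_subset hScont⟩
  obtain ⟨-, hNE, hNcard⟩ := hN x hx
  obtain ⟨t, ht⟩ := nonempty_of_ncard_ne_zero (by omega : N.ncard ≠ 0)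
  exact (hN t (hNE ht)).1 ht
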